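/- Let m = n = 1, let r ∈ ℝ, μ ≥ 0, σ ≠ 0 be real constants, T > 0, and take the cone Π = [0,∞). Define P₁(t) := e^{2r(T−t)} and P₂(t) := e^{(2r − b²/(λσ_Y²) − μ²/σ²)(T−t)} for t ∈ [0,T]. Then P₁(T) = P₂(T) = 1, both functions are everywhere positive, and for every t ∈ [0,T]: P₁′(t) = −[ 2r·P₁(t) + F₁*(P₁(t),0) + G₁*(P₁(t),0,P₂(t),0) ] and P₂′(t) = −[ 2r·P₂(t) + F₂*(P₂(t),0) + G₂*(P₂(t),0) ]; here F₁*(P₁(t),0) = 0, G₁*(P₁(t),0,P₂(t),0) = 0, F₂*(P₂(t),0) = −P₂(t)·μ²/σ², and G₂*(P₂(t),0) = −P₂(t)·b²/(λσ_Y²). -/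
import Mathlib


open MeasureTheory Real Set

/-- `F₁*(P,Λ) := inf_{v≥0} [Pσ²v² + 2v(Pμ+σΛ)]` (cone `Π = [0,∞)`, `m = n = 1`). -/
noncomputable def F1s (μ σ P Λ : ℝ) : ℝ :=
  sInf ((fun v => P * σ ^ 2 * v ^ 2 + 2 * v * (P * μ + σ * Λ)) '' Set.Ici 0)

/-- `F₂*(P,Λ) := inf_{v≥0} [Pσ²v² − 2v(Pμ+σΛ)]`. -/
noncomputable def F2s (μ σ P Λ : ℝ) : ℝ :=
  sInf ((fun v => P * σ ^ 2 * v ^ 2 - 2 * v * (P * μ + σ * Λ)) '' Set.Ici 0)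

/-- `G₁*(P₁,0,P₂,0) := inf_{u≥0} G₁(u,P₁,0,P₂,0)`. -/
noncomputable def G1s (ν : Measure ℝ) (lam b P₁ P₂ : ℝ) : ℝ :=
  sInf ((fun u => lam * ∫ y, (P₁ * ((max (1 - u * y) 0) ^ 2 - 1)
      + P₂ * (max (-(1 - u * y)) 0) ^ 2) ∂ν
    + 2 * u * P₁ * (b + lam * ∫ y, y ∂ν)) '' Set.Ici 0)

/-- `G₂*(P₂,0) := inf_{u≥0} G₂(u,P₂,0)`. -/
noncomputable def G2s (ν : Measure ℝ) (lam b P₂ : ℝ) : ℝ :=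
  sInf ((fun u => lam * ∫ y, P₂ * ((max (1 + u * y) 0) ^ 2 - 1) ∂ν
    - 2 * u * P₂ * (b + lam * ∫ y, y ∂ν)) '' Set.Ici 0)

lemma F1s_eq (μ σ P : ℝ) (hP : 0 < P) (hμ : 0 ≤ μ) : F1s μ σ P 0 = 0 := by
  unfold F1s
  apply IsLeast.csInf_eq
  constructor
  · exact ⟨0, Set.self_mem_Ici, by norm_num⟩
  · rintro x ⟨v, hv, rfl⟩
    simp only [Set.mem_Ici] at hv
    show 0 ≤ P * σ ^ 2 * v ^ 2 + 2 * v * (P * μ + σ * 0)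
    have h1 : (0:ℝ) ≤ σ ^ 2 := sq_nonneg σ
    have ha : 0 ≤ P * σ ^ 2 * v ^ 2 :=
      mul_nonneg (mul_nonneg hP.le h1) (sq_nonneg v)
    have hc : 0 ≤ 2 * v * (P * μ + σ * 0) := by
      rw [mul_zero, add_zero]
      exact mul_nonneg (by linarith) (mul_nonneg hP.le hμ)
    linarith

lemma F2s_eq (μ σ P : ℝ) (hP : 0 < P) (hμ : 0 ≤ μ) (hσ : σ ≠ 0) :
    F2s μ σ P 0 = -(P * μ ^ 2 / σ ^ 2) := by
  have hσ2 : (0:ℝ) < σ ^ 2 := by positivity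
  unfold F2s
  apply IsLeast.csInf_eq
  constructor
  · refine ⟨μ / σ ^ 2, Set.mem_Ici.mpr (div_nonneg hμ hσ2.le), ?_⟩
    show P * σ ^ 2 * (μ / σ ^ 2) ^ 2 - 2 * (μ / σ ^ 2) * (P * μ + σ * 0) = -(P * μ ^ 2 / σ ^ 2)
    field_simp
    ring
  · rintro x ⟨v, hv, rfl⟩
    simp only [Set.mem_Ici] at hv
    show -(P * μ ^ 2 / σ ^ 2) ≤ P * σ ^ 2 * v ^ 2 - 2 * v * (P * μ + σ * 0)
    have hkey : 0 ≤ P * (σ ^ 2 * v - μ) ^ 2 / σ ^ 2 := by positivity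
    have heq : P * σ ^ 2 * v ^ 2 - 2 * v * (P * μ + σ * 0) + P * μ ^ 2 / σ ^ 2
        = P * (σ ^ 2 * v - μ) ^ 2 / σ ^ 2 := by
      field_simp
      ring
    linarith

lemma G1s_eq (ν : Measure ℝ) [IsProbabilityMeasure ν] (hν0 : ∀ᵐ y ∂ν, 0 ≤ y)
    (lam b P₁ P₂ : ℝ) (hlam : 0 < lam) (hb : 0 < b)
    (hy : Integrable (fun y => y) ν) (hy2 : Integrable (fun y => y ^ 2) ν)
    (hP₁ : 0 < P₁) (hP₂ : 0 < P₂) :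
    G1s ν lam b P₁ P₂ = 0 := by
  unfold G1s
  apply IsLeast.csInf_eq
  constructor
  · refine ⟨0, Set.self_mem_Ici, ?_⟩
    norm_num
  · rintro x ⟨u, hu, rfl⟩
    simp only [Set.mem_Ici] at hu
    set f : ℝ → ℝ := fun y => P₁ * ((max (1 - u * y) 0) ^ 2 - 1)
      + P₂ * (max (-(1 - u * y)) 0) ^ 2 with hf
    have hmeas : AEStronglyMeasurable f ν := by
      apply Continuous.aestronglyMeasurable
      fun_prop
    have hbound : ∀ᵐ y ∂ν, ‖f y‖ ≤ P₁ + P₂ * u ^ 2 * y ^ 2 := by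
      filter_upwards [hν0] with y hy0
      have h1 : 0 ≤ max (1 - u * y) 0 := le_max_right _ _
      have h2 : max (1 - u * y) 0 ≤ 1 := max_le (by nlinarith) zero_le_one
      have h3 : 0 ≤ max (-(1 - u * y)) 0 := le_max_right _ _
      have h4 : max (-(1 - u * y)) 0 ≤ u * y := max_le (by nlinarith) (by positivity)
      have hM2 : (max (1 - u * y) 0) ^ 2 ≤ 1 := by nlinarith
      have hN2 : (max (-(1 - u * y)) 0) ^ 2 ≤ (u * y) ^ 2 := by nlinarith
      have hA := mul_le_mul_of_nonneg_left hM2 hP₁.le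
      have hB := mul_le_mul_of_nonneg_left hN2 hP₂.le
      have hA0 : 0 ≤ P₁ * (max (1 - u * y) 0) ^ 2 :=
        mul_nonneg hP₁.le (sq_nonneg _)
      have hB0 : 0 ≤ P₂ * (max (-(1 - u * y)) 0) ^ 2 :=
        mul_nonneg hP₂.le (sq_nonneg _)
      rw [Real.norm_eq_abs, abs_le]
      simp only [hf]
      constructor
      · nlinarith
      · nlinarith
    have hgint : Integrable (fun y => P₁ + P₂ * u ^ 2 * y ^ 2) ν :=
      (integrable_const P₁).add (hy2.const_mul (P₂ * u ^ 2))
    have hint : Integrable f ν := Integrable.mono' hgint hmeas hbound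
    have hmono : ∀ᵐ y ∂ν, (fun y => -(2 * u * P₁) * y) y ≤ f y := by
      filter_upwards [hν0] with y hy0
      simp only [hf]
      have h3 : 0 ≤ max (-(1 - u * y)) 0 := le_max_right _ _
      have hx : 0 ≤ u * y := by positivity
      have hM : (max (1 - u * y) 0) ^ 2 ≥ 1 - 2 * (u * y) := by
        rcases le_total (1 - u * y) 0 with h | h
        · rw [max_eq_right h]; nlinarith
        · rw [max_eq_left h]; nlinarith
      nlinarith [mul_nonneg hP₂.le (mul_nonneg h3 h3)]
    have hI : ∫ y, -(2 * u * P₁) * y ∂ν ≤ ∫ y, f y ∂ν :=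
      integral_mono_ae (hy.const_mul _) hint hmono
    rw [integral_const_mul] at hI
    have hlamI : lam * (-(2 * u * P₁) * ∫ y, y ∂ν) ≤ lam * ∫ y, f y ∂ν :=
      mul_le_mul_of_nonneg_left hI hlam.le
    have h2u : 0 ≤ 2 * u * P₁ * b := by positivity
    show 0 ≤ lam * (∫ y, f y ∂ν) + 2 * u * P₁ * (b + lam * ∫ y, y ∂ν)
    nlinarith [hlamI, h2u]

lemma G2s_eq (ν : Measure ℝ) [IsProbabilityMeasure ν] (hν0 : ∀ᵐ y ∂ν, 0 ≤ y)
    (lam b P₂ : ℝ) (hlam : 0 < lam) (hb : 0 < b)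
    (hy : Integrable (fun y => y) ν) (hy2 : Integrable (fun y => y ^ 2) ν)
    (hσY : 0 < ∫ y, y ^ 2 ∂ν) (hP₂ : 0 < P₂) :
    G2s ν lam b P₂ = -(P₂ * b ^ 2 / (lam * ∫ y, y ^ 2 ∂ν)) := by
  unfold G2s
  set bY := ∫ y, y ∂ν with hbY
  set σY2 := ∫ y, y ^ 2 ∂ν with hσY2
  have hd : 0 < lam * σY2 := mul_pos hlam hσY
  have hval : ∀ u : ℝ, 0 ≤ u →
      (lam * ∫ y, P₂ * ((max (1 + u * y) 0) ^ 2 - 1) ∂ν - 2 * u * P₂ * (b + lam * bY))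
      = P₂ * (lam * σY2 * u ^ 2 - 2 * b * u) := by
    intro u hu
    have hcong : ∫ y, P₂ * ((max (1 + u * y) 0) ^ 2 - 1) ∂ν
        = ∫ y, ((P₂ * (2 * u)) * y + (P₂ * u ^ 2) * y ^ 2) ∂ν := by
      apply integral_congr_ae
      filter_upwards [hν0] with y hy0
      have h1 : (0:ℝ) ≤ 1 + u * y := by positivity
      rw [max_eq_left h1]
      ring
    rw [hcong, integral_add (hy.const_mul _) (hy2.const_mul _),
      integral_const_mul, integral_const_mul]
    ring
  apply IsLeast.csInf_eq
  constructor
  · refine ⟨b / (lam * σY2), Set.mem_Ici.mpr (by positivity), ?_⟩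
    show lam * ∫ y, P₂ * ((max (1 + (b / (lam * σY2)) * y) 0) ^ 2 - 1) ∂ν
      - 2 * (b / (lam * σY2)) * P₂ * (b + lam * bY) = -(P₂ * b ^ 2 / (lam * σY2))
    rw [hval _ (by positivity)]
    field_simp
    ring
  · rintro x ⟨u, hu, rfl⟩
    simp only [Set.mem_Ici] at hu
    show -(P₂ * b ^ 2 / (lam * σY2)) ≤ lam * ∫ y, P₂ * ((max (1 + u * y) 0) ^ 2 - 1) ∂ν
      - 2 * u * P₂ * (b + lam * bY)
    rw [hval u hu]
    have hkey : 0 ≤ P₂ * (lam * σY2 * u - b) ^ 2 / (lam * σY2) := by positivity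
    have heq : P₂ * (lam * σY2 * u ^ 2 - 2 * b * u) + P₂ * b ^ 2 / (lam * σY2)
        = P₂ * (lam * σY2 * u - b) ^ 2 / (lam * σY2) := by
      field_simp
      ring
    linarith

lemma hasDerivAt_expP (c T : ℝ) (P : ℝ → ℝ) (hP : ∀ t, P t = Real.exp (c * (T - t)))
    (t : ℝ) : HasDerivAt P (-(c * P t)) t := by
  have hPe : P = fun t => Real.exp (c * (T - t)) := funext hP
  rw [hPe]
  have h : HasDerivAt (fun t : ℝ => Real.exp (c * (T - t)))
      (Real.exp (c * (T - t)) * (c * (-1))) t :=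
    (((hasDerivAt_id t).const_sub T).const_mul c).exp
  convert h using 1
  show -(c * Real.exp (c * (T - t))) = Real.exp (c * (T - t)) * (c * -1)
  ring

/-- for constant coefficients (`m = n = 1`, `Π = [0,∞)`, `r ∈ ℝ`, `μ ≥ 0`,
`σ ≠ 0`), the functions `P₁(t) = e^{2r(T−t)}` and
`P₂(t) = e^{(2r − b²/(λσ_Y²) − μ²/σ²)(T−t)}` are positive, equal `1` at `T`, and solve the
Riccati ODEs; moreover `F₁* = 0`, `G₁* = 0`, `F₂* = −P₂μ²/σ²` and `G₂* = −P₂b²/(λσ_Y²)`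
along them. -/
theorem stmt13 (ν : Measure ℝ) [IsProbabilityMeasure ν]
    (hν0 : ∀ᵐ y ∂ν, 0 ≤ y)
    (lam b : ℝ) (hlam : 0 < lam) (hb : 0 < b)
    (hy : Integrable (fun y => y) ν)
    (hy2 : Integrable (fun y => y ^ 2) ν)
    (hbY : 0 < ∫ y, y ∂ν) (hσY : 0 < ∫ y, y ^ 2 ∂ν)
    (r μ σ T : ℝ) (hμ : 0 ≤ μ) (hσ : σ ≠ 0) (hT : 0 < T)
    (P₁ P₂ : ℝ → ℝ)
    (hP₁ : ∀ t, P₁ t = Real.exp (2 * r * (T - t)))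
    (hP₂ : ∀ t, P₂ t
      = Real.exp ((2 * r - b ^ 2 / (lam * ∫ y, y ^ 2 ∂ν) - μ ^ 2 / σ ^ 2) * (T - t))) :
    P₁ T = 1 ∧ P₂ T = 1 ∧ (∀ t, 0 < P₁ t ∧ 0 < P₂ t) ∧
    ∀ t ∈ Set.Icc 0 T,
      F1s μ σ (P₁ t) 0 = 0 ∧
      G1s ν lam b (P₁ t) (P₂ t) = 0 ∧
      F2s μ σ (P₂ t) 0 = -(P₂ t * μ ^ 2 / σ ^ 2) ∧
      G2s ν lam b (P₂ t) = -(P₂ t * b ^ 2 / (lam * ∫ y, y ^ 2 ∂ν)) ∧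
      HasDerivAt P₁
        (-(2 * r * P₁ t + F1s μ σ (P₁ t) 0 + G1s ν lam b (P₁ t) (P₂ t))) t ∧
      HasDerivAt P₂
        (-(2 * r * P₂ t + F2s μ σ (P₂ t) 0 + G2s ν lam b (P₂ t))) t := by
  have hpos : ∀ t, 0 < P₁ t ∧ 0 < P₂ t := fun t =>
    ⟨by rw [hP₁ t]; exact Real.exp_pos _, by rw [hP₂ t]; exact Real.exp_pos _⟩
  refine ⟨by rw [hP₁ T]; simp, by rw [hP₂ T]; simp, hpos, ?_⟩
  intro t ht
  have h1 : F1s μ σ (P₁ t) 0 = 0 := F1s_eq μ σ (P₁ t) (hpos t).1 hμ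
  have h2 : G1s ν lam b (P₁ t) (P₂ t) = 0 :=
    G1s_eq ν hν0 lam b (P₁ t) (P₂ t) hlam hb hy hy2 (hpos t).1 (hpos t).2
  have h3 : F2s μ σ (P₂ t) 0 = -(P₂ t * μ ^ 2 / σ ^ 2) :=
    F2s_eq μ σ (P₂ t) (hpos t).2 hμ hσ
  have h4 : G2s ν lam b (P₂ t) = -(P₂ t * b ^ 2 / (lam * ∫ y, y ^ 2 ∂ν)) :=
    G2s_eq ν hν0 lam b (P₂ t) hlam hb hy hy2 hσY (hpos t).2
  refine ⟨h1, h2, h3, h4, ?_, ?_⟩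
  · have hd := hasDerivAt_expP (2 * r) T P₁ hP₁ t
    convert hd using 1
    rw [h1, h2]
    ring
  · have hd := hasDerivAt_expP
      (2 * r - b ^ 2 / (lam * ∫ y, y ^ 2 ∂ν) - μ ^ 2 / σ ^ 2) T P₂ hP₂ t
    convert hd using 1
    rw [h3, h4]
    ring
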